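/- Let X be a positive random variable (X > 0 almost surely) with E[X] = 1, and let λ > 0. Then: (i) for every P ∈ (0, λ), 0 < P·ES_{P/λ}(X) ≤ λ, where P·ES_{P/λ}(X) = λ·∫₀^{P/λ} VaR_u(X) du; (ii) if in addition E^bau > λρ̂ > 0, then the demand function P ↦ VaR_{P/λ}(X)·(E^bau − P·ES_{P/λ}(X)·ρ̂) is strictly positive and non-increasing on (0, λ). -/

import Mathlib

/-!
`VaR μ X` is the quantile function of `X` read from the upper tail: for `0 < ε < 1`,
`VaR_ε(X) ≤ y ↔ 1 - ε ≤ ℙ[X ≤ y]`, by right-continuity of the distribution function. Hence the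
region `{(u, t) | 0 < t < VaR_u(X)}` over `(0, 1)` is `{(u, t) | 0 < t, ℙ[X ≤ t] < 1 - u}`, and
slicing it the other way (Fubini) turns `∫₀¹ VaR_u(X) du` into `∫₀^∞ ℙ[X > t] dt = E[X]`.
For `X > 0` the function `VaR` is positive and antitone on `(0, 1)`, so `ε ↦ ∫₀^ε VaR_u(X) du` is
positive, nondecreasing and bounded by `E[X] = 1`; the demand is then a product of two positive
antitone factors.
-/

open MeasureTheory

/-- Value-at-risk at level `ε`: `VaR_ε(X) = inf {y | ℙ[X ≤ y] ≥ 1 − ε}`. -/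
noncomputable def VaR {Ω : Type*} [MeasurableSpace Ω] (μ : Measure Ω)
    (X : Ω → ℝ) (ε : ℝ) : ℝ :=
  sInf {y : ℝ | 1 - ε ≤ (μ {ω | X ω ≤ y}).toReal}

/-- Expected shortfall at level `ε`: `ES_ε(X) = (1/ε)∫₀^ε VaR_u(X) du`. -/
noncomputable def ES {Ω : Type*} [MeasurableSpace Ω] (μ : Measure Ω)
    (X : Ω → ℝ) (ε : ℝ) : ℝ :=
  (1 / ε) * ∫ u in (0 : ℝ)..ε, VaR μ X u

open ProbabilityTheory Set Filter Topology

lemma ProbabilityTheory.csInf_cdf_le_iff (ν : Measure ℝ) [IsProbabilityMeasure ν] {c x : ℝ}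
    (hc : c ∈ Ioo 0 1) : sInf {y | c ≤ cdf ν y} ≤ x ↔ c ≤ cdf ν x := by
  set S := {y | c ≤ cdf ν y}
  have hne : S.Nonempty := ((tendsto_cdf_atTop ν).eventually (eventually_ge_nhds hc.2)).exists
  have hbdd : BddBelow S := by
    obtain ⟨b, hb⟩ :=
      ((tendsto_cdf_atBot ν).eventually (eventually_lt_nhds hc.1)).exists_forall_of_atBot
    exact ⟨b, fun y hy => le_of_not_gt fun hyb => (hb y hyb.le).not_ge hy⟩
  have hmem : sInf S ∈ S := by
    refine ge_of_tendsto ((cdf ν).right_continuous _ |>.mono Ioi_subset_Ici_self) ?_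
    filter_upwards [self_mem_nhdsWithin] with y hy
    obtain ⟨s, hs, hsy⟩ := exists_lt_of_csInf_lt hne hy
    exact hs.trans (monotone_cdf ν hsy.le)
  exact ⟨fun h => hmem.trans (monotone_cdf ν h), fun h => csInf_le hbdd h⟩

section VaR

variable {Ω : Type*} [MeasurableSpace Ω] {μ : Measure Ω} [IsProbabilityMeasure μ] {X : Ω → ℝ}
  {ε y : ℝ}

lemma VaR_le_iff (hX : Measurable X) (hε : ε ∈ Ioo 0 1) :
    VaR μ X ε ≤ y ↔ 1 - ε ≤ (μ {ω | X ω ≤ y}).toReal := by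
  have : IsProbabilityMeasure (μ.map X) := Measure.isProbabilityMeasure_map hX.aemeasurable
  have hcdf : ∀ y, cdf (μ.map X) y = (μ {ω | X ω ≤ y}).toReal := fun y => by
    rw [cdf_eq_real, measureReal_def, Measure.map_apply hX measurableSet_Iic]; rfl
  simp only [VaR, ← hcdf]
  exact csInf_cdf_le_iff _ ⟨by linarith [hε.2], by linarith [hε.1]⟩

lemma lt_VaR_iff (hX : Measurable X) (hε : ε ∈ Ioo 0 1) :
    y < VaR μ X ε ↔ (μ {ω | X ω ≤ y}).toReal < 1 - ε := by
  simpa only [not_le] using (VaR_le_iff hX hε).not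

lemma lt_VaR_of_ae_lt (hX : Measurable X) (hXy : ∀ᵐ ω ∂μ, y < X ω) (hε : ε ∈ Ioo 0 1) :
    y < VaR μ X ε := by
  have hnull : μ {ω | X ω ≤ y} = 0 :=
    measure_mono_null (fun ω (h : X ω ≤ y) => h.not_gt) (ae_iff.mp hXy)
  rw [lt_VaR_iff hX hε, hnull, ENNReal.toReal_zero]
  linarith [hε.2]

lemma VaR_pos (hX : Measurable X) (hXpos : ∀ᵐ ω ∂μ, 0 < X ω) (hε : ε ∈ Ioo 0 1) :
    0 < VaR μ X ε :=
  lt_VaR_of_ae_lt hX hXpos hε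

lemma VaR_nonneg (hX : Measurable X) (hXnn : 0 ≤ᵐ[μ] X) (hε : ε ∈ Ioo 0 1) :
    0 ≤ VaR μ X ε :=
  le_of_forall_lt fun _ hy => lt_VaR_of_ae_lt hX (hXnn.mono fun _ h => hy.trans_le h) hε

lemma VaR_antitoneOn (hX : Measurable X) : AntitoneOn (VaR μ X) (Ioo 0 1) :=
  fun _ hu _ hv huv => (VaR_le_iff hX hv).2 <| by linarith [(VaR_le_iff (μ := μ) hX hu).1 le_rfl]

lemma measure_lt_eq_ofReal_one_sub (hX : Measurable X) (t : ℝ) :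
    μ {ω | t < X ω} = ENNReal.ofReal (1 - (μ {ω | X ω ≤ t}).toReal) := by
  have hcompl : {ω | t < X ω} = {ω | X ω ≤ t}ᶜ := by ext; simp
  rw [hcompl, prob_compl_eq_one_sub (measurableSet_le hX measurable_const),
    ENNReal.ofReal_sub _ ENNReal.toReal_nonneg, ENNReal.ofReal_one,
    ENNReal.ofReal_toReal (measure_ne_top μ _)]

lemma lintegral_ofReal_VaR (hX : Measurable X) (hXnn : 0 ≤ᵐ[μ] X) :
    ∫⁻ u in Ioo 0 1, ENNReal.ofReal (VaR μ X u) = ∫⁻ ω, ENNReal.ofReal (X ω) ∂μ := by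
  set F : ℝ → ℝ := fun y => (μ {ω | X ω ≤ y}).toReal
  have hF : Measurable F := Monotone.measurable fun a b hab =>
    ENNReal.toReal_mono (measure_ne_top μ _) (measure_mono fun ω (h : X ω ≤ a) => h.trans hab)
  set s : Set (ℝ × ℝ) := {p | F p.2 < 1 - p.1}
  have hs : MeasurableSet s :=
    measurableSet_lt (hF.comp measurable_snd) (measurable_const.sub measurable_fst)
  have hslice_u : ∀ u ∈ Ioo (0 : ℝ) 1,
      ENNReal.ofReal (VaR μ X u) = volume.restrict (Ioi 0) (Prod.mk u ⁻¹' s) := by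
    intro u hu
    have hslice : Prod.mk u ⁻¹' s = Iio (VaR μ X u) := ext fun _ => (lt_VaR_iff hX hu).symm
    rw [hslice, Measure.restrict_apply' measurableSet_Ioi, Iio_inter_Ioi, Real.volume_Ioo,
      sub_zero]
  have hslice_t : ∀ t, volume.restrict (Ioo 0 1) ((·, t) ⁻¹' s) = μ {ω | t < X ω} := by
    intro t
    have hFt : 0 ≤ F t := ENNReal.toReal_nonneg
    have hslice : (·, t) ⁻¹' s ∩ Ioo 0 1 = Ioo 0 (1 - F t) := by
      ext u
      simp only [s, mem_inter_iff, mem_preimage, mem_ofPred_eq, mem_Ioo]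
      constructor
      · rintro ⟨h, h0, -⟩; exact ⟨h0, by linarith⟩
      · rintro ⟨h0, h⟩; exact ⟨by linarith, h0, by linarith⟩
    rw [Measure.restrict_apply' measurableSet_Ioo, hslice, Real.volume_Ioo, sub_zero,
      measure_lt_eq_ofReal_one_sub hX]
  calc ∫⁻ u in Ioo 0 1, ENNReal.ofReal (VaR μ X u)
      = ∫⁻ u in Ioo 0 1, volume.restrict (Ioi 0) (Prod.mk u ⁻¹' s) :=
        setLIntegral_congr_fun measurableSet_Ioo hslice_u
    _ = (volume.restrict (Ioo 0 1)).prod (volume.restrict (Ioi 0)) s :=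
        (Measure.prod_apply hs).symm
    _ = ∫⁻ t in Ioi 0, volume.restrict (Ioo 0 1) ((·, t) ⁻¹' s) := Measure.prod_apply_symm hs
    _ = ∫⁻ t in Ioi 0, μ {ω | t < X ω} := lintegral_congr hslice_t
    _ = ∫⁻ ω, ENNReal.ofReal (X ω) ∂μ :=
        (lintegral_eq_lintegral_meas_lt μ hXnn hX.aemeasurable).symm

lemma intervalIntegrable_VaR (hX : Measurable X) (hXnn : 0 ≤ᵐ[μ] X) (hXint : Integrable X μ) :
    IntervalIntegrable (VaR μ X) volume 0 1 := by
  rw [intervalIntegrable_iff_integrableOn_Ioo_of_le zero_le_one]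
  refine ⟨(aemeasurable_restrict_of_antitoneOn measurableSet_Ioo
    (VaR_antitoneOn hX)).aestronglyMeasurable, ?_⟩
  rw [hasFiniteIntegral_iff_ofReal ((ae_restrict_iff' measurableSet_Ioo).2
    (.of_forall fun _ => VaR_nonneg hX hXnn)), lintegral_ofReal_VaR hX hXnn]
  exact hXint.lintegral_lt_top

lemma integral_VaR_zero_one (hX : Measurable X) (hXnn : 0 ≤ᵐ[μ] X) (hXint : Integrable X μ) :
    ∫ u in (0 : ℝ)..1, VaR μ X u = ∫ ω, X ω ∂μ := by
  have hVaR := intervalIntegrable_VaR hX hXnn hXint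
  rw [intervalIntegrable_iff_integrableOn_Ioo_of_le zero_le_one] at hVaR
  rw [intervalIntegral.integral_of_le zero_le_one, integral_Ioc_eq_integral_Ioo,
    integral_eq_lintegral_of_nonneg_ae ((ae_restrict_iff' measurableSet_Ioo).2
      (.of_forall fun _ => VaR_nonneg hX hXnn)) hVaR.aestronglyMeasurable,
    lintegral_ofReal_VaR hX hXnn, integral_eq_lintegral_of_nonneg_ae hXnn hX.aestronglyMeasurable]

lemma monotoneOn_integral_VaR (hX : Measurable X) (hXnn : 0 ≤ᵐ[μ] X) (hXint : Integrable X μ) :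
    MonotoneOn (fun ε => ∫ u in (0 : ℝ)..ε, VaR μ X u) (Icc 0 1) := by
  intro a ha b hb hab
  have hnonneg : 0 ≤ᵐ[volume.restrict (Ioc 0 b)] VaR μ X :=
    ae_restrict_of_ae_eq_of_ae_restrict Ioo_ae_eq_Ioc <| (ae_restrict_iff' measurableSet_Ioo).2 <|
      .of_forall fun _ hu => VaR_nonneg hX hXnn ⟨hu.1, hu.2.trans_le hb.2⟩
  exact intervalIntegral.integral_mono_interval le_rfl ha.1 hab hnonneg
    ((intervalIntegrable_VaR hX hXnn hXint).mono_set (uIcc_subset_uIcc_left (by simp [hb.1, hb.2])))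

lemma integral_VaR_le (hX : Measurable X) (hXnn : 0 ≤ᵐ[μ] X) (hXint : Integrable X μ)
    (hε : ε ∈ Icc 0 1) : ∫ u in (0 : ℝ)..ε, VaR μ X u ≤ ∫ ω, X ω ∂μ :=
  integral_VaR_zero_one hX hXnn hXint ▸
    monotoneOn_integral_VaR hX hXnn hXint hε (right_mem_Icc.2 zero_le_one) hε.2

lemma integral_VaR_pos (hX : Measurable X) (hXpos : ∀ᵐ ω ∂μ, 0 < X ω) (hXint : Integrable X μ)
    (hε : ε ∈ Ioc 0 1) : 0 < ∫ u in (0 : ℝ)..ε, VaR μ X u :=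
  intervalIntegral.intervalIntegral_pos_of_pos_on
    ((intervalIntegrable_VaR hX (hXpos.mono fun _ h => h.le) hXint).mono_set
      (uIcc_subset_uIcc_left (by simp [hε.1.le, hε.2])))
    (fun _ hu => VaR_pos hX hXpos ⟨hu.1, hu.2.trans_le hε.2⟩) hε.1

end VaR

lemma mul_ES_div {Ω : Type*} [MeasurableSpace Ω] {μ : Measure Ω} {X : Ω → ℝ} {lam P : ℝ}
    (hlam : lam ≠ 0) (hP : P ≠ 0) :
    P * ES μ X (P / lam) = lam * ∫ u in (0 : ℝ)..P / lam, VaR μ X u := by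
  rw [ES]
  field_simp

/-- For a positive random variable `X` with `E[X] = 1` and
`λ > 0`: (i) for every `P ∈ (0, λ)`, `0 < P·ES_{P/λ}(X) ≤ λ`, with
`P·ES_{P/λ}(X) = λ∫₀^{P/λ} VaR_u(X) du`; (ii) if `E^bau > λρ̂ > 0`, then the
certificate demand `P ↦ VaR_{P/λ}(X)(E^bau − P·ES_{P/λ}(X)ρ̂)` is strictly
positive and non-increasing on `(0, λ)`. -/
theorem certificate_demand_positive_and_antitone
    {Ω : Type*} [MeasurableSpace Ω] (μ : Measure Ω) [IsProbabilityMeasure μ]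
    (X : Ω → ℝ) (hXmeas : Measurable X)
    (hXpos : ∀ᵐ ω ∂μ, 0 < X ω)
    (hXint : Integrable X μ) (hEX : ∫ ω, X ω ∂μ = 1)
    (lam : ℝ) (hlam : 0 < lam) :
    (∀ P ∈ Set.Ioo (0 : ℝ) lam,
      0 < P * ES μ X (P / lam) ∧
      P * ES μ X (P / lam) ≤ lam ∧
      P * ES μ X (P / lam) = lam * ∫ u in (0 : ℝ)..(P / lam), VaR μ X u) ∧
    (∀ Ebau ρhat : ℝ, 0 < ρhat → lam * ρhat < Ebau →
      (∀ P ∈ Set.Ioo (0 : ℝ) lam,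
        0 < VaR μ X (P / lam) * (Ebau - P * ES μ X (P / lam) * ρhat)) ∧
      AntitoneOn (fun P => VaR μ X (P / lam) * (Ebau - P * ES μ X (P / lam) * ρhat))
        (Set.Ioo (0 : ℝ) lam)) := by
  have hXnn : 0 ≤ᵐ[μ] X := hXpos.mono fun _ h => h.le
  have hlevel : ∀ P ∈ Ioo 0 lam, P / lam ∈ Ioo 0 1 := fun P hP =>
    ⟨div_pos hP.1 hlam, (div_lt_one hlam).2 hP.2⟩
  have hshare : ∀ P ∈ Ioo 0 lam,
      P * ES μ X (P / lam) = lam * ∫ u in (0 : ℝ)..P / lam, VaR μ X u :=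
    fun P hP => mul_ES_div hlam.ne' hP.1.ne'
  have hshare_le : ∀ P ∈ Ioo 0 lam, P * ES μ X (P / lam) ≤ lam := fun P hP => by
    rw [hshare P hP]
    exact mul_le_of_le_one_right hlam.le
      (hEX ▸ integral_VaR_le hXmeas hXnn hXint (Ioo_subset_Icc_self (hlevel P hP)))
  have hshare_mono : MonotoneOn (fun P => P * ES μ X (P / lam)) (Ioo 0 lam) :=
    fun P hP Q hQ hPQ => by
      simp only [hshare P hP, hshare Q hQ]
      gcongr
      exact monotoneOn_integral_VaR hXmeas hXnn hXint (Ioo_subset_Icc_self (hlevel P hP))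
        (Ioo_subset_Icc_self (hlevel Q hQ)) (by gcongr)
  refine ⟨fun P hP => ⟨?_, hshare_le P hP, hshare P hP⟩, fun Ebau ρhat hρ hEbau => ?_⟩
  · rw [hshare P hP]
    exact mul_pos hlam (integral_VaR_pos hXmeas hXpos hXint (Ioo_subset_Ioc_self (hlevel P hP)))
  have hfactor_pos : ∀ P ∈ Ioo 0 lam, 0 < Ebau - P * ES μ X (P / lam) * ρhat := fun P hP => by
    nlinarith [hshare_le P hP]
  refine ⟨fun P hP => mul_pos (VaR_pos hXmeas hXpos (hlevel P hP)) (hfactor_pos P hP), ?_⟩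
  intro P hP Q hQ hPQ
  have hVaR : VaR μ X (Q / lam) ≤ VaR μ X (P / lam) :=
    VaR_antitoneOn hXmeas (hlevel P hP) (hlevel Q hQ) (by gcongr)
  have hfactor : Ebau - Q * ES μ X (Q / lam) * ρhat ≤ Ebau - P * ES μ X (P / lam) * ρhat := by
    nlinarith [hshare_mono hP hQ hPQ]
  exact mul_le_mul hVaR hfactor (hfactor_pos Q hQ).le (VaR_pos hXmeas hXpos (hlevel P hP)).le
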